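/- arXiv:1002.4983 — 2 statements merged into one kernel-verified Lean document; each statement's English description precedes it below -/
import Mathlib

section
/- Let X be an odd orthosymplectic endomorphism, k ≥ 1 an integer, y ∈ V, and set x = X^{k−1}(y); assume X(x) = 0 and x ∉ Im(X^k). Then Ker(X^a) ⊆ x^⊥ for every integer a with 0 ≤ a ≤ k−1, and Ker(X^k) ⊄ x^⊥, i.e. there exists z ∈ Ker(X^k) with B(x,z) ≠ 0. -/
/-!
With the parity operator `S (v, w) = (-v, w)`, the `B`-adjoint of `X` is `S X`, and since `X` is
odd, `S X = -X S`, so `(S X)^n` has the same kernel as `X^n`. For a nondegenerate form on a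
finite-dimensional space, the range of an operator is the left orthogonal of the kernel of its
adjoint; hence `x ∈ Im(X^n)` iff `Ker(X^n) ⊆ x^⊥`. The first claim is this for `n = k - 1`
(where `x = X^{k-1} y`) together with `Ker(X^a) ⊆ Ker(X^{k-1})`; the second is this for `n = k`.
-/

/-- The bilinear super-symmetric form `B` on `V = V₀ × V₁` associated to a nondegenerate
symmetric bilinear form `φ` on `V₀` and a nondegenerate alternating bilinear form `ψ`
on `V₁`: `B((v,w),(v',w')) = φ(v,v') + ψ(w,w')`. -/
def Bform {V₀ V₁ : Type} [AddCommGroup V₀] [Module ℂ V₀] [AddCommGroup V₁] [Module ℂ V₁]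
    (φ : V₀ →ₗ[ℂ] V₀ →ₗ[ℂ] ℂ) (ψ : V₁ →ₗ[ℂ] V₁ →ₗ[ℂ] ℂ) (p q : V₀ × V₁) : ℂ :=
  φ p.1 q.1 + ψ p.2 q.2

/-- The graded pieces of `V = V₀ × V₁`: `Vgr V₀ V₁ false = V₀ × 0` (even part) and
`Vgr V₀ V₁ true = 0 × V₁` (odd part). -/
def Vgr (V₀ V₁ : Type) [AddCommGroup V₀] [Module ℂ V₀] [AddCommGroup V₁] [Module ℂ V₁]
    (ε : Bool) : Submodule ℂ (V₀ × V₁) :=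
  if ε then Submodule.prod ⊥ ⊤ else Submodule.prod ⊤ ⊥

/-- The `B`-orthogonal complement `x^⊥ = {z : B(x,z) = 0}` of a vector `x ∈ V₀ × V₁`. -/
noncomputable def perp {V₀ V₁ : Type} [AddCommGroup V₀] [Module ℂ V₀] [AddCommGroup V₁] [Module ℂ V₁]
    (φ : V₀ →ₗ[ℂ] V₀ →ₗ[ℂ] ℂ) (ψ : V₁ →ₗ[ℂ] V₁ →ₗ[ℂ] ℂ) (x : V₀ × V₁) :
    Submodule ℂ (V₀ × V₁) :=
  LinearMap.ker ((φ x.1).comp (LinearMap.fst ℂ V₀ V₁) + (ψ x.2).comp (LinearMap.snd ℂ V₀ V₁))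

namespace LinearMap

theorem IsAdjointPair.pow {R M N : Type*} [CommSemiring R] [AddCommMonoid M] [Module R M]
    [AddCommMonoid N] [Module R N] {B : M →ₗ[R] M →ₗ[R] N} {f g : Module.End R M}
    (h : IsAdjointPair B B f g) (n : ℕ) : IsAdjointPair B B ⇑(f ^ n) ⇑(g ^ n) := by
  induction n with
  | zero => exact isAdjointPair_one
  | succ n ih => rw [pow_succ f, pow_succ' g]; exact ih.mul h

variable {K V : Type*} [Field K] [AddCommGroup V] [Module K V]

theorem SeparatingLeft.surjective [FiniteDimensional K V] {B : LinearMap.BilinForm K V}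
    (hB : B.SeparatingLeft) : Function.Surjective B := by
  have hinj : Function.Injective B := ker_eq_bot.mp (separatingLeft_iff_ker_eq_bot.mp hB)
  exact (injective_iff_surjective_of_finrank_eq_finrank Subspace.dual_finrank_eq.symm).mp hinj

theorem IsAdjointPair.mem_range_iff_ker_le_ker [FiniteDimensional K V]
    {B : LinearMap.BilinForm K V} (hB : B.SeparatingLeft) {T T' : Module.End K V}
    (h : IsAdjointPair B B T T') {x : V} :
    x ∈ range T ↔ ker T' ≤ ker (B x) := by
  constructor
  · rintro ⟨p, rfl⟩ q hq
    rw [mem_ker] at hq ⊢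
    rw [h, hq, map_zero]
  · intro hx
    have hBx : B x ∈ range T'.dualMap := by
      rw [range_dualMap_eq_dualAnnihilator_ker]
      exact (Submodule.mem_dualAnnihilator _).mpr fun q hq ↦ hx hq
    obtain ⟨g, hg⟩ := hBx
    obtain ⟨p, rfl⟩ := hB.surjective g
    refine ⟨p, sub_eq_zero.mp (hB _ fun q ↦ ?_)⟩
    rw [map_sub, sub_apply, h, ← hg, dualMap_apply, sub_self]

end LinearMap

namespace Module.End

variable {R M : Type*} [Ring R] [AddCommGroup M] [Module R M]

theorem pow_apply_eq_zero_iff_of_anticomm {S X : End R M} (hS : Function.Injective S)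
    (hSX : S * X = -X * S) (n : ℕ) (w : M) : (X ^ n) (S w) = 0 ↔ (X ^ n) w = 0 := by
  have hcomm : S ((X ^ n) w) = ((-1) ^ n * X ^ n) (S w) := by
    rw [← neg_pow, ← mul_apply, (SemiconjBy.pow_right hSX n).eq, mul_apply]
  rw [← map_eq_zero_iff S hS (x := (X ^ n) w), hcomm]
  rcases neg_one_pow_eq_or (End R M) n with h | h <;> simp [h]

theorem ker_mul_pow_eq_ker_pow_of_anticomm {S X : End R M} (hS : Function.Injective S)
    (hSX : S * X = -X * S) (n : ℕ) : LinearMap.ker ((S * X) ^ n) = LinearMap.ker (X ^ n) := by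
  induction n with
  | zero => rfl
  | succ n ih =>
    ext z
    have ih' := SetLike.ext_iff.mp ih (S (X z))
    simp only [LinearMap.mem_ker, pow_succ, mul_apply] at ih' ⊢
    rw [ih', pow_apply_eq_zero_iff_of_anticomm hS hSX]

end Module.End

section OddOrthosymplectic

variable {V₀ V₁ : Type} [AddCommGroup V₀] [Module ℂ V₀] [AddCommGroup V₁] [Module ℂ V₁]

def superForm (φ : V₀ →ₗ[ℂ] V₀ →ₗ[ℂ] ℂ) (ψ : V₁ →ₗ[ℂ] V₁ →ₗ[ℂ] ℂ) :
    LinearMap.BilinForm ℂ (V₀ × V₁) :=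
  φ.compl₁₂ (LinearMap.fst ℂ V₀ V₁) (LinearMap.fst ℂ V₀ V₁) +
    ψ.compl₁₂ (LinearMap.snd ℂ V₀ V₁) (LinearMap.snd ℂ V₀ V₁)

theorem superForm_apply (φ : V₀ →ₗ[ℂ] V₀ →ₗ[ℂ] ℂ) (ψ : V₁ →ₗ[ℂ] V₁ →ₗ[ℂ] ℂ) (p q : V₀ × V₁) :
    superForm φ ψ p q = Bform φ ψ p q :=
  rfl

theorem superForm_separatingLeft {φ : V₀ →ₗ[ℂ] V₀ →ₗ[ℂ] ℂ} {ψ : V₁ →ₗ[ℂ] V₁ →ₗ[ℂ] ℂ}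
    (hφ : φ.SeparatingLeft) (hψ : ψ.SeparatingLeft) : (superForm φ ψ).SeparatingLeft := by
  intro p hp
  refine Prod.ext (hφ _ fun b ↦ ?_) (hψ _ fun b ↦ ?_)
  · simpa [superForm_apply, Bform] using hp (b, 0)
  · simpa [superForm_apply, Bform] using hp (0, b)

variable (V₀ V₁) in
def parity : Module.End ℂ (V₀ × V₁) :=
  LinearMap.prodMap (-LinearMap.id) LinearMap.id

theorem parity_injective : Function.Injective (parity V₀ V₁) := fun p q h ↦ by
  simpa [parity, Prod.ext_iff] using h

variable {u : V₀ →ₗ[ℂ] V₁} {ustar : V₁ →ₗ[ℂ] V₀} {X : Module.End ℂ (V₀ × V₁)}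

theorem parity_mul_eq_neg_mul_parity (hX : ∀ p : V₀ × V₁, X p = (ustar p.2, u p.1)) :
    parity V₀ V₁ * X = -X * parity V₀ V₁ := by
  ext p <;> simp [parity, hX]

theorem isAdjointPair_parity_mul {φ : V₀ →ₗ[ℂ] V₀ →ₗ[ℂ] ℂ} {ψ : V₁ →ₗ[ℂ] V₁ →ₗ[ℂ] ℂ}
    (hφ : ∀ a b : V₀, φ a b = φ b a) (hψ : ψ.IsAlt)
    (hadj : ∀ (v : V₀) (w : V₁), φ (ustar w) v = ψ w (u v))
    (hX : ∀ p : V₀ × V₁, X p = (ustar p.2, u p.1)) :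
    LinearMap.IsAdjointPair (superForm φ ψ) (superForm φ ψ) X (parity V₀ V₁ * X) := by
  intro p q
  simp only [superForm_apply, Bform, Module.End.mul_apply, hX, parity, LinearMap.prodMap_apply,
    LinearMap.neg_apply, LinearMap.id_apply, map_neg]
  rw [hadj, hφ p.1, hadj, ← LinearMap.IsAlt.neg hψ (u p.1) q.2]
  ring

end OddOrthosymplectic

theorem ker_pow_le_perp_and_not_ker_pow_le_perp_general
    (V₀ V₁ : Type) [AddCommGroup V₀] [Module ℂ V₀] [FiniteDimensional ℂ V₀]
    [AddCommGroup V₁] [Module ℂ V₁] [FiniteDimensional ℂ V₁]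
    (φ : V₀ →ₗ[ℂ] V₀ →ₗ[ℂ] ℂ) (ψ : V₁ →ₗ[ℂ] V₁ →ₗ[ℂ] ℂ)
    (hφsymm : ∀ a b : V₀, φ a b = φ b a)
    (hφnd : ∀ a : V₀, (∀ b : V₀, φ a b = 0) → a = 0)
    (hψalt : ∀ a : V₁, ψ a a = 0)
    (hψnd : ∀ a : V₁, (∀ b : V₁, ψ a b = 0) → a = 0)
    (u : V₀ →ₗ[ℂ] V₁) (ustar : V₁ →ₗ[ℂ] V₀)
    (hadj : ∀ (v : V₀) (w : V₁), φ (ustar w) v = ψ w (u v))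
    (X : Module.End ℂ (V₀ × V₁))
    (hX : ∀ p : V₀ × V₁, X p = (ustar p.2, u p.1))
    (k : ℕ) (y x : V₀ × V₁) (hxy : x = (X ^ (k - 1)) y)
    (hxim : x ∉ LinearMap.range (X ^ k)) :
    (∀ a : ℕ, a ≤ k - 1 → ∀ z ∈ LinearMap.ker (X ^ a), Bform φ ψ x z = 0) ∧
      ∃ z ∈ LinearMap.ker (X ^ k), Bform φ ψ x z ≠ 0 := by
  have hker (n : ℕ) : LinearMap.ker ((parity V₀ V₁ * X) ^ n) = LinearMap.ker (X ^ n) :=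
    Module.End.ker_mul_pow_eq_ker_pow_of_anticomm parity_injective
      (parity_mul_eq_neg_mul_parity hX) n
  have hrange (n : ℕ) :
      x ∈ LinearMap.range (X ^ n) ↔ LinearMap.ker (X ^ n) ≤ LinearMap.ker (superForm φ ψ x) := by
    rw [← hker]
    exact ((isAdjointPair_parity_mul hφsymm hψalt hadj hX).pow n).mem_range_iff_ker_le_ker
      (superForm_separatingLeft hφnd hψnd)
  refine ⟨fun a ha z hz ↦ ?_, ?_⟩
  · exact (hrange (k - 1)).mp ⟨y, hxy.symm⟩ (Module.End.pow_map_zero_of_le ha hz)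
  · by_contra! hperp
    exact hxim ((hrange k).mpr hperp)

/-- Let `X` be odd orthosymplectic, `k ≥ 1`, `x = X^{k−1}(y)` with `X(x) = 0` and
`x ∉ Im(X^k)`. Then `Ker(X^a) ⊆ x^⊥` for all `a ≤ k−1`, while `Ker(X^k) ⊄ x^⊥`. -/
theorem ker_pow_le_perp_and_not_ker_pow_le_perp
    (V₀ V₁ : Type) [AddCommGroup V₀] [Module ℂ V₀] [FiniteDimensional ℂ V₀]
    [AddCommGroup V₁] [Module ℂ V₁] [FiniteDimensional ℂ V₁]
    (φ : V₀ →ₗ[ℂ] V₀ →ₗ[ℂ] ℂ) (ψ : V₁ →ₗ[ℂ] V₁ →ₗ[ℂ] ℂ)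
    (hφsymm : ∀ a b : V₀, φ a b = φ b a)
    (hφnd : ∀ a : V₀, (∀ b : V₀, φ a b = 0) → a = 0)
    (hψalt : ∀ a : V₁, ψ a a = 0)
    (hψnd : ∀ a : V₁, (∀ b : V₁, ψ a b = 0) → a = 0)
    (u : V₀ →ₗ[ℂ] V₁) (ustar : V₁ →ₗ[ℂ] V₀)
    (hadj : ∀ (v : V₀) (w : V₁), φ (ustar w) v = ψ w (u v))
    (X : Module.End ℂ (V₀ × V₁))
    (hX : ∀ p : V₀ × V₁, X p = (ustar p.2, u p.1))
    (k : ℕ) (hk : 1 ≤ k) (y x : V₀ × V₁) (hxy : x = (X ^ (k - 1)) y)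
    (hXx : X x = 0) (hxim : x ∉ LinearMap.range (X ^ k)) :
    (∀ a : ℕ, a ≤ k - 1 → ∀ z ∈ LinearMap.ker (X ^ a), Bform φ ψ x z = 0) ∧
      ∃ z ∈ LinearMap.ker (X ^ k), Bform φ ψ x z ≠ 0 :=
  ker_pow_le_perp_and_not_ker_pow_le_perp_general V₀ V₁ φ ψ hφsymm hφnd hψalt hψnd u ustar hadj X hX
    k y x hxy hxim
end

section
/- Let X be an odd orthosymplectic endomorphism, k ≥ 1 an integer, y ∈ V, and set x = X^{k−1}(y); assume X(x) = 0, x ∉ Im(X^k), and x ∈ V_ε for some ε ∈ {0,1}. Then: (i) Ker(X^a) ∩ V_{1−ε} ⊆ x^⊥ for every integer a ≥ 0; (ii) dim(Ker(X^a) ∩ x^⊥ ∩ V_ε) = dim(Ker(X^a) ∩ V_ε) for 0 ≤ a ≤ k−1; (iii) dim(Ker(X^a) ∩ x^⊥ ∩ V_ε) = dim(Ker(X^a) ∩ V_ε) − 1 for every a ≥ k. -/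
/-!
Write `s = gradeSign` for the grading operator `(v, w) ↦ (v, -w)`. Symmetry of `φ`, skewness of
`ψ` and adjointness of `u, u*` give `B(X p, q) = B(p, X (s q))`, and `X s = -s X`, so `s`
preserves each `Ker Xⁿ`; moving the factors of `X` across `B` one at a time shows
`Im Xⁿ ⊥ Ker Xⁿ`. As `B` is nondegenerate, counting dimensions makes `Im Xⁿ` the full left
orthogonal of `Ker Xⁿ`.

(i) is the orthogonality of `V₀` and `V₁`. (ii): `Ker Xᵃ ⊆ Ker X^{k-1} ⊥ X^{k-1} y = x`.
(iii): if `Ker Xᵃ ∩ V_ε ⊆ x^⊥`, then, `Ker X^k` being graded (it is `s`-stable), (i) gives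
`Ker X^k ⊆ x^⊥`, i.e. `x ∈ Im X^k`; so `x^⊥` is a hyperplane not containing `Ker Xᵃ ∩ V_ε`.
-/

open LinearMap in
theorem Module.End.ker_pow_le_ker_pow_of_le {R M : Type*} [Semiring R] [AddCommMonoid M]
    [Module R M] (f : Module.End R M) {m n : ℕ} (h : m ≤ n) : ker (f ^ m) ≤ ker (f ^ n) := by
  rw [← Nat.sub_add_cancel h, pow_add]
  exact ker_le_ker_comp _ _

open LinearMap Module in
theorem Submodule.finrank_inf_ker_add_one {K V : Type*} [DivisionRing K] [AddCommGroup V]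
    [Module K V] [FiniteDimensional K V] {W : Submodule K V} {f : Dual K V}
    (h : ¬W ≤ ker f) : finrank K ↥(W ⊓ ker f) + 1 = finrank K W := by
  have hf : f.domRestrict W ≠ 0 := fun h0 =>
    h fun w hw => by simpa using LinearMap.congr_fun h0 ⟨w, hw⟩
  rw [← Dual.finrank_ker_add_one_of_ne_zero hf, ker_domRestrict, ← map_comap_subtype,
    finrank_map_subtype_eq]

open LinearMap Module in
theorem LinearMap.BilinForm.range_eq_flip_orthogonal_ker {K V : Type*} [Field K]
    [AddCommGroup V] [Module K V] [FiniteDimensional K V] {B : LinearMap.BilinForm K V}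
    (hB : B.Nondegenerate) {T : End K V} (hT : range T ≤ B.flip.orthogonal (ker T)) :
    range T = B.flip.orthogonal (ker T) :=
  Submodule.eq_of_le_of_finrank_le hT <| by
    rw [finrank_orthogonal hB.flip, ← finrank_range_add_finrank_ker T]
    omega

section OddOrthosymplectic

variable {V₀ V₁ : Type} [AddCommGroup V₀] [Module ℂ V₀] [AddCommGroup V₁] [Module ℂ V₁]

theorem mem_Vgr_false {p : V₀ × V₁} : p ∈ Vgr V₀ V₁ false ↔ p.2 = 0 := by
  simp [Vgr]

theorem mem_Vgr_true {p : V₀ × V₁} : p ∈ Vgr V₀ V₁ true ↔ p.1 = 0 := by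
  simp [Vgr]

theorem mem_perp_iff {φ : V₀ →ₗ[ℂ] V₀ →ₗ[ℂ] ℂ} {ψ : V₁ →ₗ[ℂ] V₁ →ₗ[ℂ] ℂ} {x z : V₀ × V₁} :
    z ∈ perp φ ψ x ↔ Bform φ ψ x z = 0 :=
  Iff.rfl

theorem Vgr_bnot_le_perp {φ : V₀ →ₗ[ℂ] V₀ →ₗ[ℂ] ℂ} {ψ : V₁ →ₗ[ℂ] V₁ →ₗ[ℂ] ℂ} {ε : Bool}
    {x : V₀ × V₁} (hx : x ∈ Vgr V₀ V₁ ε) : Vgr V₀ V₁ (!ε) ≤ perp φ ψ x := by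
  intro z hz
  rw [mem_perp_iff, Bform]
  cases ε
  · simp [mem_Vgr_false.1 hx, mem_Vgr_true.1 hz]
  · simp [mem_Vgr_true.1 hx, mem_Vgr_false.1 hz]

def Bform.toBilinForm (φ : V₀ →ₗ[ℂ] V₀ →ₗ[ℂ] ℂ) (ψ : V₁ →ₗ[ℂ] V₁ →ₗ[ℂ] ℂ) :
    LinearMap.BilinForm ℂ (V₀ × V₁) :=
  φ.compl₁₂ (LinearMap.fst ℂ V₀ V₁) (LinearMap.fst ℂ V₀ V₁) +
    ψ.compl₁₂ (LinearMap.snd ℂ V₀ V₁) (LinearMap.snd ℂ V₀ V₁)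

theorem Bform.toBilinForm_apply (φ : V₀ →ₗ[ℂ] V₀ →ₗ[ℂ] ℂ) (ψ : V₁ →ₗ[ℂ] V₁ →ₗ[ℂ] ℂ)
    (p q : V₀ × V₁) : Bform.toBilinForm φ ψ p q = Bform φ ψ p q :=
  rfl

theorem Bform.toBilinForm_nondegenerate [FiniteDimensional ℂ V₀] [FiniteDimensional ℂ V₁]
    {φ : V₀ →ₗ[ℂ] V₀ →ₗ[ℂ] ℂ} {ψ : V₁ →ₗ[ℂ] V₁ →ₗ[ℂ] ℂ} (hφ : φ.SeparatingLeft)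
    (hψ : ψ.SeparatingLeft) : (Bform.toBilinForm φ ψ).Nondegenerate := by
  refine .ofSeparatingLeft fun p hp => Prod.ext (hφ _ fun v => ?_) (hψ _ fun w => ?_)
  · simpa [Bform.toBilinForm_apply, Bform] using hp (v, 0)
  · simpa [Bform.toBilinForm_apply, Bform] using hp (0, w)

def oddEnd (u : V₀ →ₗ[ℂ] V₁) (ustar : V₁ →ₗ[ℂ] V₀) : Module.End ℂ (V₀ × V₁) :=
  (ustar ∘ₗ LinearMap.snd ℂ V₀ V₁).prod (u ∘ₗ LinearMap.fst ℂ V₀ V₁)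

def gradeSign : Module.End ℂ (V₀ × V₁) :=
  (LinearMap.fst ℂ V₀ V₁).prod (-LinearMap.snd ℂ V₀ V₁)

@[simp]
theorem gradeSign_apply (p : V₀ × V₁) : gradeSign p = (p.1, -p.2) :=
  rfl

variable (u : V₀ →ₗ[ℂ] V₁) (ustar : V₁ →ₗ[ℂ] V₀)

@[simp]
theorem oddEnd_apply (p : V₀ × V₁) : oddEnd u ustar p = (ustar p.2, u p.1) :=
  rfl

theorem oddEnd_gradeSign (p : V₀ × V₁) :
    oddEnd u ustar (gradeSign p) = -gradeSign (oddEnd u ustar p) := by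
  simp

theorem pow_oddEnd_gradeSign (n : ℕ) (p : V₀ × V₁) :
    (oddEnd u ustar ^ n) (gradeSign p) = (-1 : ℂ) ^ n • gradeSign ((oddEnd u ustar ^ n) p) := by
  induction n with
  | zero => simp
  | succ n ih =>
    rw [pow_succ', Module.End.mul_apply, ih, map_smul, oddEnd_gradeSign, pow_succ']
    simp

theorem gradeSign_mem_ker_pow {n : ℕ} {z : V₀ × V₁} (hz : z ∈ LinearMap.ker (oddEnd u ustar ^ n)) :
    gradeSign z ∈ LinearMap.ker (oddEnd u ustar ^ n) := by
  rw [LinearMap.mem_ker] at hz ⊢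
  rw [pow_oddEnd_gradeSign, hz, map_zero, smul_zero]

theorem ker_pow_oddEnd_le_sup_graded (n : ℕ) (ε : Bool) :
    LinearMap.ker (oddEnd u ustar ^ n) ≤
      LinearMap.ker (oddEnd u ustar ^ n) ⊓ Vgr V₀ V₁ ε ⊔
        LinearMap.ker (oddEnd u ustar ^ n) ⊓ Vgr V₀ V₁ (!ε) := by
  intro z hz
  have hs := gradeSign_mem_ker_pow u ustar hz
  set K := LinearMap.ker (oddEnd u ustar ^ n)
  have heven : (2 : ℂ)⁻¹ • (z + gradeSign z) ∈ K ⊓ Vgr V₀ V₁ false :=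
    ⟨K.smul_mem _ (K.add_mem hz hs), mem_Vgr_false.2 (by simp)⟩
  have hodd : (2 : ℂ)⁻¹ • (z - gradeSign z) ∈ K ⊓ Vgr V₀ V₁ true :=
    ⟨K.smul_mem _ (K.sub_mem hz hs), mem_Vgr_true.2 (by simp)⟩
  have hsum : (2 : ℂ)⁻¹ • (z + gradeSign z) + (2 : ℂ)⁻¹ • (z - gradeSign z) = z := by
    module
  cases ε
  · exact hsum ▸ Submodule.add_mem_sup heven hodd
  · rw [add_comm] at hsum
    exact hsum ▸ Submodule.add_mem_sup hodd heven

variable {φ : V₀ →ₗ[ℂ] V₀ →ₗ[ℂ] ℂ} {ψ : V₁ →ₗ[ℂ] V₁ →ₗ[ℂ] ℂ}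

theorem Bform_oddEnd_apply (hφ : ∀ a b : V₀, φ a b = φ b a) (hψ : ψ.IsAlt)
    (hadj : ∀ (v : V₀) (w : V₁), φ (ustar w) v = ψ w (u v)) (p q : V₀ × V₁) :
    Bform φ ψ (oddEnd u ustar p) q = Bform φ ψ p (oddEnd u ustar (gradeSign q)) := by
  simp only [Bform, oddEnd_apply, gradeSign_apply, map_neg]
  linear_combination hadj q.1 p.2 - hψ.neg (u p.1) q.2 + hφ p.1 (ustar q.2) + hadj p.1 q.2

theorem Bform_pow_oddEnd_apply_eq_zero (hφ : ∀ a b : V₀, φ a b = φ b a) (hψ : ψ.IsAlt)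
    (hadj : ∀ (v : V₀) (w : V₁), φ (ustar w) v = ψ w (u v)) (n : ℕ) (p : V₀ × V₁) {z : V₀ × V₁}
    (hz : z ∈ LinearMap.ker (oddEnd u ustar ^ n)) : Bform φ ψ ((oddEnd u ustar ^ n) p) z = 0 := by
  induction n generalizing z with
  | zero => simp_all [Bform]
  | succ n ih =>
    rw [pow_succ', Module.End.mul_apply, Bform_oddEnd_apply u ustar hφ hψ hadj]
    refine ih ?_
    rw [LinearMap.mem_ker, ← Module.End.mul_apply, ← pow_succ]
    exact gradeSign_mem_ker_pow u ustar hz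

theorem ker_pow_oddEnd_le_perp (hφ : ∀ a b : V₀, φ a b = φ b a) (hψ : ψ.IsAlt)
    (hadj : ∀ (v : V₀) (w : V₁), φ (ustar w) v = ψ w (u v)) (n : ℕ) (y : V₀ × V₁) :
    LinearMap.ker (oddEnd u ustar ^ n) ≤ perp φ ψ ((oddEnd u ustar ^ n) y) :=
  fun _ hz => Bform_pow_oddEnd_apply_eq_zero u ustar hφ hψ hadj n y hz

theorem mem_range_pow_oddEnd_of_ker_le_perp [FiniteDimensional ℂ V₀] [FiniteDimensional ℂ V₁]
    (hφ : ∀ a b : V₀, φ a b = φ b a) (hψ : ψ.IsAlt) (hφnd : φ.SeparatingLeft)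
    (hψnd : ψ.SeparatingLeft) (hadj : ∀ (v : V₀) (w : V₁), φ (ustar w) v = ψ w (u v)) {n : ℕ}
    {x : V₀ × V₁} (hx : LinearMap.ker (oddEnd u ustar ^ n) ≤ perp φ ψ x) :
    x ∈ LinearMap.range (oddEnd u ustar ^ n) := by
  rw [LinearMap.BilinForm.range_eq_flip_orthogonal_ker
    (Bform.toBilinForm_nondegenerate hφnd hψnd)]
  · exact hx
  · rintro _ ⟨p, rfl⟩ z hz
    exact Bform_pow_oddEnd_apply_eq_zero u ustar hφ hψ hadj n p hz

end OddOrthosymplectic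

theorem dim_ker_pow_inf_perp_inf_graded_general
    (V₀ V₁ : Type) [AddCommGroup V₀] [Module ℂ V₀] [FiniteDimensional ℂ V₀]
    [AddCommGroup V₁] [Module ℂ V₁] [FiniteDimensional ℂ V₁]
    (φ : V₀ →ₗ[ℂ] V₀ →ₗ[ℂ] ℂ) (ψ : V₁ →ₗ[ℂ] V₁ →ₗ[ℂ] ℂ)
    (hφsymm : ∀ a b : V₀, φ a b = φ b a)
    (hφnd : ∀ a : V₀, (∀ b : V₀, φ a b = 0) → a = 0)
    (hψalt : ∀ a : V₁, ψ a a = 0)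
    (hψnd : ∀ a : V₁, (∀ b : V₁, ψ a b = 0) → a = 0)
    (u : V₀ →ₗ[ℂ] V₁) (ustar : V₁ →ₗ[ℂ] V₀)
    (hadj : ∀ (v : V₀) (w : V₁), φ (ustar w) v = ψ w (u v))
    (X : Module.End ℂ (V₀ × V₁))
    (hX : ∀ p : V₀ × V₁, X p = (ustar p.2, u p.1))
    (k : ℕ) (y x : V₀ × V₁) (hxy : x = (X ^ (k - 1)) y)
    (hxim : x ∉ LinearMap.range (X ^ k))
    (ε : Bool) (hxε : x ∈ Vgr V₀ V₁ ε) :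
    (∀ a : ℕ, ∀ z ∈ LinearMap.ker (X ^ a) ⊓ Vgr V₀ V₁ (!ε), Bform φ ψ x z = 0) ∧
    (∀ a : ℕ, a ≤ k - 1 →
      Module.finrank ℂ ↥(LinearMap.ker (X ^ a) ⊓ perp φ ψ x ⊓ Vgr V₀ V₁ ε)
        = Module.finrank ℂ ↥(LinearMap.ker (X ^ a) ⊓ Vgr V₀ V₁ ε)) ∧
    (∀ a : ℕ, k ≤ a →
      Module.finrank ℂ ↥(LinearMap.ker (X ^ a) ⊓ perp φ ψ x ⊓ Vgr V₀ V₁ ε) + 1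
        = Module.finrank ℂ ↥(LinearMap.ker (X ^ a) ⊓ Vgr V₀ V₁ ε)) := by
  obtain rfl : X = oddEnd u ustar := LinearMap.ext hX
  have hopp_perp : Vgr V₀ V₁ (!ε) ≤ perp φ ψ x := Vgr_bnot_le_perp hxε
  refine ⟨fun a z hz => hopp_perp hz.2, fun a ha => ?_, fun a ha => ?_⟩
  · have hker : LinearMap.ker (oddEnd u ustar ^ a) ≤ perp φ ψ x := hxy ▸
      (Module.End.ker_pow_le_ker_pow_of_le _ ha).trans
        (ker_pow_oddEnd_le_perp u ustar hφsymm hψalt hadj _ y)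
    rw [inf_right_comm, inf_eq_left.2 (inf_le_left.trans hker)]
  · rw [inf_right_comm]
    refine Submodule.finrank_inf_ker_add_one fun heven_perp => hxim ?_
    refine mem_range_pow_oddEnd_of_ker_le_perp u ustar hφsymm hψalt hφnd hψnd hadj ?_
    refine (ker_pow_oddEnd_le_sup_graded u ustar k ε).trans
      (sup_le ?_ (inf_le_right.trans hopp_perp))
    exact (inf_le_inf_right _ (Module.End.ker_pow_le_ker_pow_of_le _ ha)).trans heven_perp

/-- Let `X` be odd orthosymplectic, `k ≥ 1`, `x = X^{k−1}(y)` with `X(x) = 0`,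
`x ∉ Im(X^k)` and `x ∈ V_ε`. Then (i) `Ker(X^a) ∩ V_{1−ε} ⊆ x^⊥` for all `a`;
(ii) `dim(Ker(X^a) ∩ x^⊥ ∩ V_ε) = dim(Ker(X^a) ∩ V_ε)` for `a ≤ k−1`; and
(iii) `dim(Ker(X^a) ∩ x^⊥ ∩ V_ε) = dim(Ker(X^a) ∩ V_ε) − 1` for `a ≥ k`. -/
theorem dim_ker_pow_inf_perp_inf_graded
    (V₀ V₁ : Type) [AddCommGroup V₀] [Module ℂ V₀] [FiniteDimensional ℂ V₀]
    [AddCommGroup V₁] [Module ℂ V₁] [FiniteDimensional ℂ V₁]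
    (φ : V₀ →ₗ[ℂ] V₀ →ₗ[ℂ] ℂ) (ψ : V₁ →ₗ[ℂ] V₁ →ₗ[ℂ] ℂ)
    (hφsymm : ∀ a b : V₀, φ a b = φ b a)
    (hφnd : ∀ a : V₀, (∀ b : V₀, φ a b = 0) → a = 0)
    (hψalt : ∀ a : V₁, ψ a a = 0)
    (hψnd : ∀ a : V₁, (∀ b : V₁, ψ a b = 0) → a = 0)
    (u : V₀ →ₗ[ℂ] V₁) (ustar : V₁ →ₗ[ℂ] V₀)
    (hadj : ∀ (v : V₀) (w : V₁), φ (ustar w) v = ψ w (u v))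
    (X : Module.End ℂ (V₀ × V₁))
    (hX : ∀ p : V₀ × V₁, X p = (ustar p.2, u p.1))
    (k : ℕ) (hk : 1 ≤ k) (y x : V₀ × V₁) (hxy : x = (X ^ (k - 1)) y)
    (hXx : X x = 0) (hxim : x ∉ LinearMap.range (X ^ k))
    (ε : Bool) (hxε : x ∈ Vgr V₀ V₁ ε) :
    (∀ a : ℕ, ∀ z ∈ LinearMap.ker (X ^ a) ⊓ Vgr V₀ V₁ (!ε), Bform φ ψ x z = 0) ∧
    (∀ a : ℕ, a ≤ k - 1 →
      Module.finrank ℂ ↥(LinearMap.ker (X ^ a) ⊓ perp φ ψ x ⊓ Vgr V₀ V₁ ε)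
        = Module.finrank ℂ ↥(LinearMap.ker (X ^ a) ⊓ Vgr V₀ V₁ ε)) ∧
    (∀ a : ℕ, k ≤ a →
      Module.finrank ℂ ↥(LinearMap.ker (X ^ a) ⊓ perp φ ψ x ⊓ Vgr V₀ V₁ ε) + 1
        = Module.finrank ℂ ↥(LinearMap.ker (X ^ a) ⊓ Vgr V₀ V₁ ε)) :=
  dim_ker_pow_inf_perp_inf_graded_general V₀ V₁ φ ψ hφsymm hφnd hψalt hψnd u ustar hadj X hX k y x
    hxy hxim ε hxε
end
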